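/- Let W be the first Weyl algebra over an algebraically closed field k of characteristic zero. Every ∂_q-invariant automorphism θ of M_N(W) satisfies θ(p) = p + α for some scalar α ∈ k, and θ(q) = q - B(p) for some matrix B(p) ∈ M_N(k[p]). -/

import Mathlib

open Polynomial

set_option synthInstance.maxHeartbeats 1000000
set_option maxHeartbeats 1000000

noncomputable section

variable (k : Type*) [Field k] [CharZero k]

/-- The operator `p`: multiplication by `X` on `k[X]`. -/
def pOp : Module.End k (Polynomial k) := LinearMap.mulLeft k (X : Polynomial k)

/-- The operator `q = d/dX` on `k[X]`. -/
def qOp : Module.End k (Polynomial k) := derivative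

/-- The (first) Weyl algebra, realized concretely as the subalgebra of
`End_k(k[X])` generated by multiplication by `X` and `d/dX`.  (In characteristic
zero this is a faithful model of `k⟨p,q | qp - pq = 1⟩`.) -/
def WeylA : Subalgebra k (Module.End k (Polynomial k)) :=
  Algebra.adjoin k {pOp k, qOp k}

/-- The element `p` of the Weyl algebra. -/
def pW : WeylA k := ⟨pOp k, Algebra.subset_adjoin (Set.mem_insert _ _)⟩

/-- The element `q` of the Weyl algebra. -/
def qW : WeylA k := ⟨qOp k, Algebra.subset_adjoin (Set.mem_insert_of_mem _ rfl)⟩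

variable (N : ℕ)

/-- `M_N(W)`, the `N×N` matrices over the Weyl algebra. -/
abbrev MW := Matrix (Fin N) (Fin N) (WeylA k)

/-- The scalar matrix `p·Id_N`. -/
def pM : MW k N := Matrix.diagonal fun _ => pW k

/-- The scalar matrix `q·Id_N`. -/
def qM : MW k N := Matrix.diagonal fun _ => qW k

/-- The derivation `∂_q(a) = [a,p]` on `M_N(W)`. -/
def dq (a : MW k N) : MW k N := a * pM k N - pM k N * a

/-- Evaluation of a polynomial at `p`, i.e. the embedding `k[p] → W`. -/
def polyP : Polynomial k →ₐ[k] WeylA k := Polynomial.aeval (pW k)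

/-- Evaluation of a polynomial at `q`, i.e. the embedding `k[q] → W`. -/
def polyQ : Polynomial k →ₐ[k] WeylA k := Polynomial.aeval (qW k)


/-! Since `θ` commutes with `ad p`, we get `[b, θ p] = θ [θ⁻¹ b, p] = [b, p]` for every `b`,
so `θ p - p` is central. The center of `M_N(W)` is the center of `W`, which is `k`: an operator
on `k[X]` commuting with `X` and `d/dX` is a scalar. Likewise `[θ q, p] = θ [q, p] = 1 = [q, p]`,
so every entry of `q - θ q` commutes with `p`, and the commutant of multiplication by `X` on
`k[X]` consists of multiplication operators, i.e. of elements of `k[p]`. -/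

theorem Commute.aeval_right {R A : Type*} [CommSemiring R] [Semiring A]
    [Algebra R A] {w x : A} (h : Commute w x) (f : R[X]) : Commute w (aeval x f) :=
  have hx : x ∈ Subalgebra.centralizer R {w} :=
    (Subalgebra.mem_centralizer_iff R).mpr fun _ hg => (Set.mem_singleton_iff.mp hg) ▸ h
  ((Subalgebra.mem_centralizer_iff R).mp
    (Algebra.adjoin_le (Set.singleton_subset_iff.mpr hx) (aeval_mem_adjoin_singleton R x)) w
    rfl)

theorem Polynomial.aeval_mulLeft_X {R : Type*} [CommSemiring R] (f : R[X]) :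
    aeval (LinearMap.mulLeft R (X : R[X])) f = LinearMap.mulLeft R f := by
  change aeval (Algebra.lmul R R[X] X) f = Algebra.lmul R R[X] f
  rw [aeval_algHom_apply, aeval_X_left_apply]

theorem Polynomial.eq_mulLeft_of_commute_mulLeft_X {R : Type*} [CommSemiring R]
    {w : Module.End R R[X]} (h : Commute w (LinearMap.mulLeft R X)) :
    w = LinearMap.mulLeft R (w 1) := by
  refine LinearMap.ext fun f => ?_
  have hf : Commute w (LinearMap.mulLeft R f) := aeval_mulLeft_X f ▸ h.aeval_right f
  calc w f = (w * LinearMap.mulLeft R f) 1 := by simp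
    _ = (LinearMap.mulLeft R f * w) 1 := by rw [hf.eq]
    _ = w 1 * f := by simp [mul_comm]

section Commutator

attribute [local instance] LieRing.ofAssociativeRing

theorem sub_mem_center_of_map_lie {A F : Type*} [Ring A] [FunLike F A A] [RingHomClass F A A]
    (θ : F) (hθ : Function.Surjective θ) {x : A} (h : ∀ a, θ ⁅a, x⁆ = ⁅θ a, x⁆) :
    θ x - x ∈ Set.center A := by
  refine Semigroup.mem_center_iff.mpr fun b => ?_
  obtain ⟨a, rfl⟩ := hθ b
  have key : ⁅θ a, θ x⁆ = ⁅θ a, x⁆ := by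
    rw [← h, Ring.lie_def, Ring.lie_def, map_sub, map_mul, map_mul]
  show Commute (θ a) (θ x - x)
  rw [commute_iff_lie_eq, lie_sub, key, sub_self]

theorem commute_sub_of_lie_eq {A : Type*} [Ring A] {x y z : A} (h : ⁅y, x⁆ = ⁅z, x⁆) :
    Commute (y - z) x := by
  rw [commute_iff_lie_eq, sub_lie, h, sub_self]

end Commutator

section Weyl

variable {K : Type*} [Field K] {n : ℕ}

theorem coe_polyP (f : K[X]) : (polyP K f : Module.End K K[X]) = LinearMap.mulLeft K f := by
  rw [polyP, ← Subalgebra.coe_val, ← aeval_algHom_apply]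
  exact aeval_mulLeft_X f

theorem eq_polyP_of_commute_pW {w : WeylA K} (h : Commute w (pW K)) :
    w = polyP K ((w : Module.End K K[X]) 1) :=
  Subtype.ext <| by rw [coe_polyP]; exact eq_mulLeft_of_commute_mulLeft_X (congrArg Subtype.val h)

instance [CharZero K] : Algebra.IsCentral K (WeylA K) where
  out w hw := by
    set f := (w : Module.End K K[X]) 1
    have hwp : w = polyP K f := eq_polyP_of_commute_pW (Subalgebra.mem_center_iff.mp hw (pW K)).symm
    have hf : derivative f = 0 := by
      have := LinearMap.congr_fun (congrArg Subtype.val (Subalgebra.mem_center_iff.mp hw (qW K))) 1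
      change derivative f = (w : Module.End K K[X]) (derivative 1) at this
      rwa [derivative_one, map_zero] at this
    rw [hwp, eq_C_of_derivative_eq_zero hf, polyP, aeval_C]
    exact Subalgebra.algebraMap_mem _ _

theorem lie_qW_pW : ⁅qW K, pW K⁆ = 1 := by
  refine Subtype.ext <| LinearMap.ext fun f => ?_
  change derivative (X * f) - X * derivative f = f
  simp [derivative_mul]

theorem lie_qM_pM : ⁅qM K n, pM K n⁆ = 1 := by
  rw [qM, pM, Ring.lie_def, Matrix.diagonal_mul_diagonal, Matrix.diagonal_mul_diagonal]
  refine (Matrix.diagonal_sub (n := Fin n) (α := WeylA K) _ _).trans ?_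
  exact (congrArg Matrix.diagonal (funext fun _ => lie_qW_pW)).trans Matrix.diagonal_one

theorem exists_map_polyP_eq_of_commute_pM {M : MW K n} (h : Commute M (pM K n)) :
    ∃ B : Matrix (Fin n) (Fin n) K[X], B.map (polyP K) = M := by
  refine ⟨fun i j => (M i j : Module.End K K[X]) 1, Matrix.ext fun i j => ?_⟩
  have hij : M i j * pW K = pW K * M i j := by
    simpa [pM, Matrix.mul_diagonal, Matrix.diagonal_mul] using congrFun (congrFun h.eq i) j
  exact (eq_polyP_of_commute_pW hij).symm

end Weyl

theorem dq_invariant_automorphism_p_q (N : ℕ)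
    (θ : MW k N ≃ₐ[k] MW k N)
    (hθ : ∀ a : MW k N, θ (dq k N a) = dq k N (θ a)) :
    (∃ α : k, θ (pM k N) = pM k N + algebraMap k (MW k N) α) ∧
    (∃ B : Matrix (Fin N) (Fin N) (Polynomial k),
        θ (qM k N) = qM k N - B.map (polyP k)) := by
  have hθ_lie : ∀ a, θ ⁅a, pM k N⁆ = ⁅θ a, pM k N⁆ := hθ
  constructor
  · obtain ⟨α, hα⟩ := (Algebra.IsCentral.mem_center_iff k).mp
      (sub_mem_center_of_map_lie θ θ.surjective hθ_lie)
    exact ⟨α, by rw [← hα]; exact (add_sub_cancel (pM k N) (θ (pM k N))).symm⟩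
  · have hlie : ⁅qM k N, pM k N⁆ = ⁅θ (qM k N), pM k N⁆ := by
      rw [← hθ_lie, lie_qM_pM, map_one]
    have hcomm : Commute (qM k N - θ (qM k N)) (pM k N) :=
      commute_sub_of_lie_eq (A := MW k N) hlie
    obtain ⟨B, hB⟩ := exists_map_polyP_eq_of_commute_pM hcomm
    exact ⟨B, by rw [hB]; exact (sub_sub_cancel (qM k N) (θ (qM k N))).symm⟩

end
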